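/- The map log det on the space of integer measures is not weakly continuous: for λ an even integer ≥ 4, the polynomials pₙ(t) = tⁿ + (λ^{n−1}/2)t + 2 are monic with integer coefficients, have all roots in B(0,λ), have exactly one root in B(0,1), and that root t₀ satisfies |t₀| ≤ λ^{1−n/2}; consequently limsupₙ ∫_{z≠0} log|z| dΔ(pₙ)(z) < ∫_{z≠0} log|z| dμ(z) for any weak limit point μ of Δ(pₙ). -/

import Mathlib

/-!
Over `ℂ`, `pₙ = Xⁿ + c X + 2` with `c = λⁿ⁻¹/2` huge. Comparing `|z|ⁿ`, `c|z|` and `2` shows that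
every root has `|z| < λ` and that no root has `1 ≤ |z| ≤ 2`. Inside the unit disk, factor
`pₙ = (X - α) q` at a root `α`: there `|q(z)| = |∑ zⁱ αⁿ⁻¹⁻ⁱ + c| ≥ c - n > 0`, so the real root in
`(-1, 0)` given by the intermediate value theorem is the only one, and it is `O(1/c)`.

Hence `Δ(pₙ)` gives mass `1/n` to the complement of the annulus `2 ≤ |z| ≤ λ`, and by the
portmanteau theorem every weak limit `μ` is a probability measure on that annulus, so
`∫ log |z| dμ ≥ log 2`. On the other hand `∫ log |z| dΔ(pₙ) = log |pₙ(0)| / n = log 2 / n → 0`.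
-/

open MeasureTheory Polynomial Filter

noncomputable def rootsC (p : Polynomial ℤ) : Multiset ℂ :=
  (p.map (Int.castRingHom ℂ)).roots

noncomputable def Delta (p : Polynomial ℤ) : Measure ℂ :=
  (p.natDegree : ENNReal)⁻¹ • ((rootsC p).map (fun α => (Measure.dirac α))).sum

def WeakLim (μs : ℕ → Measure ℂ) (μ : Measure ℂ) : Prop :=
  ∀ f : BoundedContinuousFunction ℂ ℝ,
    Tendsto (fun n => ∫ z, f z ∂(μs n)) atTop (nhds (∫ z, f z ∂μ))

section RootMeasure

lemma integrable_multiset_sum_dirac (f : ℂ → ℝ) (s : Multiset ℂ) :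
    Integrable f (s.map Measure.dirac).sum := by
  induction s using Multiset.induction with
  | empty => simp
  | cons a s ih => simpa using (integrable_dirac enorm_lt_top).add_measure ih

lemma integral_multiset_sum_dirac (f : ℂ → ℝ) (s : Multiset ℂ) :
    ∫ z, f z ∂(s.map Measure.dirac).sum = (s.map f).sum := by
  induction s using Multiset.induction with
  | empty => simp
  | cons a s ih =>
    rw [Multiset.map_cons, Multiset.sum_cons, integral_add_measure
      (integrable_dirac enorm_lt_top) (integrable_multiset_sum_dirac f s), integral_dirac, ih,
      Multiset.map_cons, Multiset.sum_cons]

lemma multiset_sum_dirac_apply (s : Multiset ℂ) {A : Set ℂ} [DecidablePred (· ∈ A)]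
    (hA : MeasurableSet A) :
    (s.map Measure.dirac).sum A = Multiset.card (s.filter (· ∈ A)) := by
  induction s using Multiset.induction with
  | empty => simp
  | cons a s ih =>
    rw [Multiset.map_cons, Multiset.sum_cons, Measure.add_apply, ih, Measure.dirac_apply' _ hA,
      Multiset.filter_cons]
    by_cases ha : a ∈ A <;> simp [ha, add_comm]

lemma card_rootsC (p : ℤ[X]) : Multiset.card (rootsC p) = p.natDegree := by
  rw [rootsC, IsAlgClosed.card_roots_eq_natDegree,
    natDegree_map_eq_of_injective (RingHom.injective_int _)]

lemma ne_zero_of_mem_rootsC {p : ℤ[X]} (h0 : p.coeff 0 ≠ 0) {z : ℂ} (hz : z ∈ rootsC p) :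
    z ≠ 0 := by
  rintro rfl
  have h := isRoot_of_mem_roots hz
  rw [IsRoot, ← coeff_zero_eq_eval_zero, coeff_map] at h
  exact h0 (by simpa using h)

lemma norm_prod_rootsC {p : ℤ[X]} (hp : p.Monic) : ‖(rootsC p).prod‖ = |(p.coeff 0 : ℝ)| := by
  have h := (IsAlgClosed.splits (p.map (Int.castRingHom ℂ))).coeff_zero_eq_prod_roots_of_monic
    (hp.map _)
  rw [coeff_map, eq_comm] at h
  simpa [rootsC] using congrArg norm h

lemma integral_Delta (p : ℤ[X]) (f : ℂ → ℝ) :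
    ∫ z, f z ∂Delta p = (p.natDegree : ℝ)⁻¹ * ((rootsC p).map f).sum := by
  simp [Delta, integral_smul_measure, integral_multiset_sum_dirac]

lemma Delta_apply (p : ℤ[X]) {A : Set ℂ} [DecidablePred (· ∈ A)] (hA : MeasurableSet A) :
    Delta p A = (p.natDegree : ENNReal)⁻¹ * Multiset.card ((rootsC p).filter (· ∈ A)) := by
  simp [Delta, multiset_sum_dirac_apply _ hA]

lemma isProbabilityMeasure_Delta {p : ℤ[X]} (hp : p.natDegree ≠ 0) :
    IsProbabilityMeasure (Delta p) := by
  classical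
  constructor
  rw [Delta_apply p MeasurableSet.univ]
  simp only [Set.mem_univ, Multiset.filter_true, card_rootsC]
  exact ENNReal.inv_mul_cancel (by exact_mod_cast hp) (ENNReal.natCast_ne_top _)

lemma setIntegral_log_norm_Delta {p : ℤ[X]} (hp : p.Monic) (h0 : p.coeff 0 ≠ 0) :
    ∫ z in {0}ᶜ, Real.log ‖z‖ ∂Delta p = Real.log |(p.coeff 0 : ℝ)| / p.natDegree := by
  have hsum : Real.log ‖(rootsC p).prod‖ = ((rootsC p).map fun z => Real.log ‖z‖).sum := by
    rw [show ‖(rootsC p).prod‖ = ((rootsC p).map (‖·‖)).prod from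
      map_multiset_prod (normHom : ℂ →*₀ ℝ) _, Real.log_multiset_prod, Multiset.map_map]
    · rfl
    · simpa using fun z hz => ne_zero_of_mem_rootsC h0 hz
  rw [setIntegral_eq_integral_of_forall_compl_eq_zero (by simp), integral_Delta, ← hsum,
    norm_prod_rootsC hp, inv_mul_eq_div]

end RootMeasure

section Annulus

variable {E : Type*} [NormedAddCommGroup E]

def closedAnnulus (r R : ℝ) : Set E := {z | r ≤ ‖z‖ ∧ ‖z‖ ≤ R}

lemma isClosed_closedAnnulus {r R : ℝ} : IsClosed (closedAnnulus r R : Set E) :=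
  (isClosed_le continuous_const continuous_norm).inter
    (isClosed_le continuous_norm continuous_const)

lemma isCompact_closedAnnulus [ProperSpace E] {r R : ℝ} : IsCompact (closedAnnulus r R : Set E) :=
  Metric.isCompact_of_isClosed_isBounded isClosed_closedAnnulus
    (Metric.isBounded_closedBall.subset fun _ hz => mem_closedBall_zero_iff.mpr hz.2)

end Annulus

section WeakLimit

variable {μs : ℕ → Measure ℂ} {μ : Measure ℂ}

lemma WeakLim.isProbabilityMeasure (h : WeakLim μs μ) (hμs : ∀ n, IsProbabilityMeasure (μs n)) :
    IsProbabilityMeasure μ := by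
  have h1 := h (BoundedContinuousFunction.const ℂ 1)
  simp only [BoundedContinuousFunction.const_apply, integral_const, smul_eq_mul, mul_one,
    probReal_univ] at h1
  exact ⟨(ENNReal.toReal_eq_one_iff _).mp (tendsto_nhds_unique tendsto_const_nhds h1).symm⟩

lemma WeakLim.measure_eq_zero (h : WeakLim μs μ) (hμs : ∀ n, IsProbabilityMeasure (μs n))
    {U : Set ℂ} (hU : IsOpen U) (hlim : Tendsto (fun n => μs n U) atTop (nhds 0)) :
    μ U = 0 := by
  have := h.isProbabilityMeasure hμs
  let ν : ℕ → ProbabilityMeasure ℂ := fun n => ⟨μs n, hμs n⟩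
  let ν₀ : ProbabilityMeasure ℂ := ⟨μ, this⟩
  have hν : Tendsto ν atTop (nhds ν₀) :=
    ProbabilityMeasure.tendsto_iff_forall_integral_tendsto.mpr h
  have hle : μ U ≤ liminf (fun n => μs n U) atTop :=
    ProbabilityMeasure.le_liminf_measure_open_of_tendsto hν hU
  rwa [hlim.liminf_eq, nonpos_iff_eq_zero] at hle

lemma log_le_setIntegral_log_norm [IsProbabilityMeasure μ] {r R : ℝ} (hr : 0 < r)
    (hμ : μ (closedAnnulus r R)ᶜ = 0) :
    Real.log r ≤ ∫ z in {0}ᶜ, Real.log ‖z‖ ∂μ := by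
  set A : Set ℂ := closedAnnulus r R
  have hA : IsCompact A := isCompact_closedAnnulus
  have hA0 : A ⊆ {0}ᶜ := fun z hz => norm_ne_zero_iff.mp (hr.trans_le hz.1).ne'
  have haeA : ∀ᵐ z ∂μ, z ∈ A := by
    simpa using measure_eq_zero_iff_ae_notMem.mp hμ
  have hcont : ContinuousOn (fun z : ℂ => Real.log ‖z‖) A :=
    (continuous_norm.continuousOn).log fun z hz => norm_ne_zero_iff.mpr (hA0 hz)
  calc Real.log r = Real.log r * μ.real A := by
        rw [measureReal_def, (prob_compl_eq_zero_iff hA.measurableSet).mp hμ,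
          ENNReal.toReal_one, mul_one]
    _ ≤ ∫ z in A, Real.log ‖z‖ ∂μ :=
        setIntegral_ge_of_const_le_real hA.measurableSet hA.measure_lt_top.ne
          (fun z hz => Real.log_le_log hr hz.1) (hcont.integrableOn_compact hA)
    _ = ∫ z in {0}ᶜ, Real.log ‖z‖ ∂μ := by
        rw [Measure.restrict_eq_self_of_ae_mem haeA,
          Measure.restrict_eq_self_of_ae_mem (haeA.mono hA0)]

end WeakLimit

section Trinomial

lemma monic_X_pow_add_C_mul_X_add_C {R : Type*} [Semiring R] {n : ℕ} (hn : 2 ≤ n) (a b : R) :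
    (X ^ n + C a * X + C b).Monic := by
  rw [add_assoc]
  exact monic_X_pow_add (degree_linear_le.trans_lt (by exact_mod_cast hn))

lemma natDegree_X_pow_add_C_mul_X_add_C {R : Type*} [Semiring R] [Nontrivial R] {n : ℕ}
    (hn : 2 ≤ n) (a b : R) : (X ^ n + C a * X + C b).natDegree = n := by
  rw [add_assoc, natDegree_add_eq_left_of_natDegree_lt, natDegree_X_pow]
  exact natDegree_linear_le.trans_lt (by rw [natDegree_X_pow]; omega)

noncomputable def trinomial₂ (n : ℕ) (c : ℝ) : ℂ[X] := X ^ n + C (c : ℂ) * X + C 2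

variable {n : ℕ} {c : ℝ} {α : ℂ}

@[simp]
lemma isRoot_trinomial₂ : (trinomial₂ n c).IsRoot α ↔ α ^ n + c * α + 2 = 0 := by
  simp [trinomial₂]

lemma trinomial₂_ne_zero : trinomial₂ n c ≠ 0 := fun h => by
  have h0 := congrArg (eval 0) h
  rcases n with _ | n <;> norm_num [trinomial₂] at h0

lemma norm_pow_le_of_isRoot (hc : 0 ≤ c) (hα : (trinomial₂ n c).IsRoot α) :
    ‖α‖ ^ n ≤ c * ‖α‖ + 2 := by
  have hpow : α ^ n = -((c : ℂ) * α + 2) := by linear_combination isRoot_trinomial₂.mp hα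
  calc ‖α‖ ^ n = ‖(c : ℂ) * α + 2‖ := by rw [← norm_pow, hpow, norm_neg]
    _ ≤ c * ‖α‖ + 2 := by
      simpa [Complex.norm_real, abs_of_nonneg hc] using norm_add_le ((c : ℂ) * α) 2

lemma mul_norm_le_of_isRoot (hc : 0 ≤ c) (hα : (trinomial₂ n c).IsRoot α) :
    c * ‖α‖ ≤ ‖α‖ ^ n + 2 := by
  have hlin : (c : ℂ) * α = -(α ^ n + 2) := by linear_combination isRoot_trinomial₂.mp hα
  calc c * ‖α‖ = ‖α ^ n + 2‖ := by
        rw [← norm_neg (α ^ n + 2), ← hlin, norm_mul, Complex.norm_real, Real.norm_of_nonneg hc]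
    _ ≤ ‖α‖ ^ n + 2 := by simpa using norm_add_le (α ^ n) 2

lemma norm_lt_of_isRoot {L : ℝ} (hn : 2 ≤ n) (hc : 0 ≤ c) (hL : 4 ≤ L)
    (hcL : 2 * c ≤ L ^ (n - 1)) (hα : (trinomial₂ n c).IsRoot α) : ‖α‖ < L := by
  by_contra! hαL
  have hpow : ‖α‖ ^ n = ‖α‖ ^ (n - 1) * ‖α‖ := by rw [← pow_succ, Nat.sub_add_cancel (by omega)]
  have hLn : L ^ (n - 1) ≤ ‖α‖ ^ (n - 1) := pow_le_pow_left₀ (by linarith) hαL _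
  have h4 : 4 ≤ ‖α‖ ^ (n - 1) :=
    le_self_pow₀ (by linarith) (by omega) |>.trans' hL |>.trans hLn
  nlinarith [norm_pow_le_of_isRoot hc hα]

lemma two_lt_norm_of_isRoot (hc : 2 ^ n + 2 < c) (hα : (trinomial₂ n c).IsRoot α)
    (h1 : 1 ≤ ‖α‖) : 2 < ‖α‖ := by
  by_contra! h2
  have hc0 : 0 ≤ c := by linarith [pow_pos (two_pos (α := ℝ)) n]
  nlinarith [mul_norm_le_of_isRoot hc0 hα, pow_le_pow_left₀ (norm_nonneg α) h2 n]

lemma mul_norm_le_three_of_isRoot (hc : 0 ≤ c) (hα : (trinomial₂ n c).IsRoot α)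
    (h1 : ‖α‖ < 1) : c * ‖α‖ ≤ 3 := by
  linarith [mul_norm_le_of_isRoot hc hα, pow_le_one₀ (n := n) (norm_nonneg α) h1.le]

lemma trinomial₂_eq_X_sub_C_mul (hα : (trinomial₂ n c).IsRoot α) :
    trinomial₂ n c =
      (X - C α) * (∑ i ∈ Finset.range n, X ^ i * C (α ^ (n - 1 - i)) + C (c : ℂ)) := by
  have hgeom := geom_sum₂_mul (X : ℂ[X]) (C α) n
  simp only [← C_pow, mul_comm (X - C α)] at hgeom ⊢
  have hCα : C (α ^ n + c * α + 2) = 0 := by rw [isRoot_trinomial₂.mp hα, C_0]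
  rw [map_add, map_add, map_mul] at hCα
  rw [add_mul, hgeom, trinomial₂]
  linear_combination hCα

lemma eval_ne_zero_of_norm_le_one {z : ℂ} (hc : n < c) (hα : ‖α‖ ≤ 1) (hz : ‖z‖ ≤ 1) :
    (∑ i ∈ Finset.range n, X ^ i * C (α ^ (n - 1 - i)) + C (c : ℂ)).eval z ≠ 0 := by
  have hsum : ‖∑ i ∈ Finset.range n, z ^ i * α ^ (n - 1 - i)‖ ≤ n := by
    calc _ ≤ ∑ i ∈ Finset.range n, ‖z ^ i * α ^ (n - 1 - i)‖ := norm_sum_le _ _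
      _ ≤ ∑ _i ∈ Finset.range n, (1 : ℝ) := Finset.sum_le_sum fun i _ => by
        rw [norm_mul, norm_pow, norm_pow]
        exact mul_le_one₀ (pow_le_one₀ (norm_nonneg _) hz) (by positivity)
          (pow_le_one₀ (norm_nonneg _) hα)
      _ = n := by simp
  intro h
  simp only [eval_add, eval_finsetSum, eval_mul, eval_pow, eval_X, eval_C] at h
  rw [add_eq_zero_iff_eq_neg] at h
  rw [h, norm_neg, Complex.norm_real,
    Real.norm_of_nonneg ((Nat.cast_nonneg n).trans hc.le)] at hsum
  linarith

lemma card_filter_roots_trinomial₂_of_isRoot (hc : n < c)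
    (hα : (trinomial₂ n c).IsRoot α) (h1 : ‖α‖ < 1) :
    Multiset.card ((trinomial₂ n c).roots.filter (fun z => ‖z‖ < 1)) = 1 := by
  have hmul := trinomial₂_eq_X_sub_C_mul hα
  rw [hmul, roots_mul (hmul ▸ trinomial₂_ne_zero), roots_X_sub_C, Multiset.filter_add,
    Multiset.filter_singleton, if_pos h1, Multiset.filter_eq_nil.mpr, Multiset.card_add]
  · rfl
  · intro z hz hz1
    exact eval_ne_zero_of_norm_le_one hc h1.le hz1.le (isRoot_of_mem_roots hz)

lemma exists_real_isRoot_trinomial₂ (hc : 3 < c) :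
    ∃ x : ℝ, (trinomial₂ n c).IsRoot x ∧ |x| < 1 := by
  have hcont : ContinuousOn (fun x : ℝ => x ^ n + c * x + 2) (Set.Icc (-1) 0) := by fun_prop
  have hneg : (-1 : ℝ) ^ n + c * (-1) + 2 < 0 := by
    rcases neg_one_pow_eq_or ℝ n with h | h <;> rw [h] <;> linarith
  have hzero : 0 < (0 : ℝ) ^ n + c * 0 + 2 := by
    rcases n with _ | n <;> norm_num
  obtain ⟨x, ⟨hx1, hx0⟩, hx⟩ := intermediate_value_Icc (by norm_num) hcont ⟨hneg.le, hzero.le⟩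
  refine ⟨x, ?_, abs_lt.mpr ⟨?_, by linarith⟩⟩
  · rw [isRoot_trinomial₂]; exact_mod_cast hx
  · rcases hx1.lt_or_eq with h | rfl
    · exact h
    · linarith

lemma card_filter_roots_trinomial₂ (hcn : n < c) (hc3 : 3 < c) :
    Multiset.card ((trinomial₂ n c).roots.filter (fun z => ‖z‖ < 1)) = 1 := by
  obtain ⟨x, hx, hx1⟩ := exists_real_isRoot_trinomial₂ (n := n) hc3
  exact card_filter_roots_trinomial₂_of_isRoot hcn hx
    (by rwa [Complex.norm_real, Real.norm_eq_abs])

end Trinomial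

lemma six_div_pow_le_rpow {L : ℝ} {n : ℕ} (hL : 4 ≤ L) (hn : 4 ≤ n) :
    6 / L ^ (n - 1) ≤ L ^ (1 - (n : ℝ) / 2) := by
  have hL0 : 0 < L := by linarith
  have hexp : L ^ (1 - (n : ℝ) / 2) * L ^ (n - 1) = L ^ ((n : ℝ) / 2) := by
    rw [← Real.rpow_natCast, ← Real.rpow_add hL0, Nat.cast_sub (by omega)]
    ring_nf
  have hsq : L ^ (2 : ℝ) ≤ L ^ ((n : ℝ) / 2) :=
    Real.rpow_le_rpow_of_exponent_le (by linarith) (by rw [le_div_iff₀ two_pos]; norm_cast)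
  rw [Real.rpow_two] at hsq
  rw [div_le_iff₀ (by positivity), hexp]
  nlinarith

section TrinomialSeq

noncomputable def trinomialSeq (l n : ℕ) : ℤ[X] := X ^ n + C ((l : ℤ) ^ (n - 1) / 2) * X + C 2

variable {l n : ℕ}

lemma trinomialSeq_monic (hn : 2 ≤ n) : (trinomialSeq l n).Monic :=
  monic_X_pow_add_C_mul_X_add_C hn _ _

lemma natDegree_trinomialSeq (hn : 2 ≤ n) : (trinomialSeq l n).natDegree = n :=
  natDegree_X_pow_add_C_mul_X_add_C hn _ _

lemma coeff_zero_trinomialSeq (hn : 1 ≤ n) : (trinomialSeq l n).coeff 0 = 2 := by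
  simpa [trinomialSeq, coeff_X_pow] using (by omega : 0 ≠ n)

lemma rootsC_trinomialSeq (l n : ℕ) :
    rootsC (trinomialSeq l n) = (trinomial₂ n ((l : ℤ) ^ (n - 1) / 2 : ℤ)).roots := by
  simp [rootsC, trinomialSeq, trinomial₂, C_ofNat]

lemma two_mul_coeff_trinomialSeq (hev : Even l) (hn : 2 ≤ n) :
    2 * (((l : ℤ) ^ (n - 1) / 2 : ℤ) : ℝ) = (l : ℝ) ^ (n - 1) := by
  have h2 : (2 : ℤ) ∣ (l : ℤ) ^ (n - 1) := dvd_pow (by exact_mod_cast hev.two_dvd) (by omega)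
  exact_mod_cast Int.mul_ediv_cancel' h2

lemma pow_add_two_lt_coeff_trinomialSeq (hev : Even l) (hl : 4 ≤ l) (hn : 4 ≤ n) :
    2 ^ n + 2 < (((l : ℤ) ^ (n - 1) / 2 : ℤ) : ℝ) := by
  have h4 : (4 : ℝ) ^ (n - 1) ≤ (l : ℝ) ^ (n - 1) :=
    pow_le_pow_left₀ (by norm_num) (by exact_mod_cast hl) _
  have h4' : (4 : ℝ) ^ (n - 1) = 2 ^ n * 2 ^ (n - 2) := by
    rw [show (4 : ℝ) = 2 ^ 2 by norm_num, ← pow_mul, ← pow_add]; congr 1; omega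
  have h16 : (16 : ℝ) ≤ 2 ^ n := by
    calc (16 : ℝ) = 2 ^ 4 := by norm_num
      _ ≤ 2 ^ n := pow_le_pow_right₀ (by norm_num) hn
  have h1 : (4 : ℝ) ≤ 2 ^ (n - 2) := by
    calc (4 : ℝ) = 2 ^ 2 := by norm_num
      _ ≤ 2 ^ (n - 2) := pow_le_pow_right₀ (by norm_num) (by omega)
  nlinarith [two_mul_coeff_trinomialSeq hev (by omega : 2 ≤ n),
    mul_le_mul_of_nonneg_left h1 (by positivity : (0 : ℝ) ≤ 2 ^ n)]

lemma norm_lt_of_mem_rootsC_trinomialSeq (hev : Even l) (hl : 4 ≤ l) (hn : 4 ≤ n) {α : ℂ}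
    (hα : α ∈ rootsC (trinomialSeq l n)) : ‖α‖ < l := by
  rw [rootsC_trinomialSeq] at hα
  have hc := pow_add_two_lt_coeff_trinomialSeq hev hl hn
  have h2n : (0 : ℝ) < 2 ^ n := by positivity
  exact norm_lt_of_isRoot (by omega) (by linarith) (by exact_mod_cast hl)
    (two_mul_coeff_trinomialSeq hev (by omega)).le (isRoot_of_mem_roots hα)

lemma two_lt_norm_of_mem_rootsC_trinomialSeq (hev : Even l) (hl : 4 ≤ l) (hn : 4 ≤ n) {α : ℂ}
    (hα : α ∈ rootsC (trinomialSeq l n)) (h1 : 1 ≤ ‖α‖) : 2 < ‖α‖ := by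
  rw [rootsC_trinomialSeq] at hα
  exact two_lt_norm_of_isRoot (pow_add_two_lt_coeff_trinomialSeq hev hl hn)
    (isRoot_of_mem_roots hα) h1

lemma card_filter_rootsC_trinomialSeq (hev : Even l) (hl : 4 ≤ l) (hn : 4 ≤ n) :
    Multiset.card ((rootsC (trinomialSeq l n)).filter fun z => ‖z‖ < 1) = 1 := by
  have hc := pow_add_two_lt_coeff_trinomialSeq hev hl hn
  have hn2 : (n : ℝ) < 2 ^ n := by exact_mod_cast n.lt_two_pow_self
  have h1 : (1 : ℝ) ≤ 2 ^ n := one_le_pow₀ one_le_two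
  rw [rootsC_trinomialSeq]
  exact card_filter_roots_trinomial₂ (by linarith) (by linarith)

lemma norm_le_of_mem_rootsC_trinomialSeq (hev : Even l) (hl : 4 ≤ l) (hn : 4 ≤ n) {α : ℂ}
    (hα : α ∈ rootsC (trinomialSeq l n)) (h1 : ‖α‖ < 1) :
    ‖α‖ ≤ (l : ℝ) ^ (1 - (n : ℝ) / 2) := by
  rw [rootsC_trinomialSeq] at hα
  have hc := pow_add_two_lt_coeff_trinomialSeq hev hl hn
  have h2c := two_mul_coeff_trinomialSeq hev (by omega : 2 ≤ n)
  have h2n : (0 : ℝ) < 2 ^ n := by positivity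
  have h3 := mul_norm_le_three_of_isRoot (by linarith) (isRoot_of_mem_roots hα) h1
  refine le_trans ?_ (six_div_pow_le_rpow (by exact_mod_cast hl) hn)
  rw [le_div_iff₀ (by rw [← h2c]; linarith), ← h2c]
  nlinarith

lemma Delta_trinomialSeq_compl_annulus (hev : Even l) (hl : 4 ≤ l) (hn : 4 ≤ n) :
    Delta (trinomialSeq l n) (closedAnnulus 2 l)ᶜ = (n : ENNReal)⁻¹ := by
  classical
  rw [Delta_apply _ isClosed_closedAnnulus.measurableSet.compl, natDegree_trinomialSeq (by omega),
    Multiset.filter_congr (q := fun z => ‖z‖ < 1), card_filter_rootsC_trinomialSeq hev hl hn,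
    Nat.cast_one, mul_one]
  intro z hz
  simp only [closedAnnulus, Set.mem_compl_iff, Set.mem_ofPred_eq, not_and, not_le]
  have hzl := norm_lt_of_mem_rootsC_trinomialSeq hev hl hn hz
  by_cases h1 : ‖z‖ < 1
  · exact iff_of_true (fun h => absurd h (by linarith)) h1
  · have h2 := two_lt_norm_of_mem_rootsC_trinomialSeq hev hl hn hz (not_lt.mp h1)
    exact iff_of_false (fun h => by linarith [h h2.le]) h1

lemma setIntegral_log_norm_Delta_trinomialSeq (hn : 2 ≤ n) :
    ∫ z in {0}ᶜ, Real.log ‖z‖ ∂Delta (trinomialSeq l n) = Real.log 2 / n := by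
  have h2 := coeff_zero_trinomialSeq (l := l) (by omega : 1 ≤ n)
  rw [setIntegral_log_norm_Delta (trinomialSeq_monic hn) (by rw [h2]; norm_num), h2,
    natDegree_trinomialSeq hn]
  norm_num

end TrinomialSeq

theorem stmt13 (l : ℕ) (hev : Even l) (hl : 4 ≤ l)
    (P : ℕ → Polynomial ℤ)
    (hP : P = fun n => Polynomial.X ^ n +
      Polynomial.C ((l : ℤ) ^ (n - 1) / 2) * Polynomial.X + Polynomial.C 2) :
    (∃ N : ℕ, ∀ n ≥ N,
      (P n).Monic ∧
      (∀ α ∈ rootsC (P n), ‖α‖ < l) ∧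
      ((rootsC (P n)).filter (fun z => ‖z‖ < 1)).card = 1 ∧
      (∀ α ∈ rootsC (P n), ‖α‖ < 1 →
        ‖α‖ ≤ (l : ℝ) ^ (1 - (n : ℝ) / 2))) ∧
    ∀ (μ : Measure ℂ) (φ : ℕ → ℕ), StrictMono φ →
      WeakLim (fun k => Delta (P (φ k))) μ →
      Filter.limsup
          (fun n => ∫ z in {(0:ℂ)}ᶜ, Real.log (‖z‖) ∂(Delta (P n))) atTop
        < ∫ z in {(0:ℂ)}ᶜ, Real.log (‖z‖) ∂μ := by
  obtain rfl : P = trinomialSeq l := hP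
  refine ⟨⟨4, fun n hn => ⟨trinomialSeq_monic (by omega),
    fun α hα => norm_lt_of_mem_rootsC_trinomialSeq hev hl hn hα,
    card_filter_rootsC_trinomialSeq hev hl hn,
    fun α hα h1 => norm_le_of_mem_rootsC_trinomialSeq hev hl hn hα h1⟩⟩, fun μ φ hφ hW => ?_⟩
  have hlimsup : limsup (fun n => ∫ z in {0}ᶜ, Real.log ‖z‖ ∂Delta (trinomialSeq l n)) atTop
      = 0 := by
    refine Tendsto.limsup_eq ((tendsto_const_div_atTop_nhds_zero_nat (Real.log 2)).congr' ?_)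
    filter_upwards [eventually_ge_atTop 2] with n hn
    exact (setIntegral_log_norm_Delta_trinomialSeq hn).symm
  have hφ4 (k : ℕ) : 4 ≤ φ (k + 4) := (Nat.le_add_left 4 k).trans hφ.le_apply
  have hν : WeakLim (fun k => Delta (trinomialSeq l (φ (k + 4)))) μ :=
    fun f => (hW f).comp (tendsto_add_atTop_nat 4)
  have hνprob (k : ℕ) : IsProbabilityMeasure (Delta (trinomialSeq l (φ (k + 4)))) := by
    have := hφ4 k
    exact isProbabilityMeasure_Delta (by rw [natDegree_trinomialSeq (by omega)]; omega)
  have := hν.isProbabilityMeasure hνprob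
  have hannulus : μ (closedAnnulus 2 l)ᶜ = 0 := by
    refine hν.measure_eq_zero hνprob isClosed_closedAnnulus.isOpen_compl ?_
    simp_rw [Delta_trinomialSeq_compl_annulus hev hl (hφ4 _)]
    exact ENNReal.tendsto_inv_nat_nhds_zero.comp
      (hφ.tendsto_atTop.comp (tendsto_add_atTop_nat 4))
  rw [hlimsup]
  exact (Real.log_pos one_lt_two).trans_le (log_le_setIntegral_log_norm two_pos hannulus)
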